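/- Let {|a_{s,1}⟩⊗|a_{s,2}⟩⊗|a_{s,3}⟩⊗|a_{s,4}⟩ : s = 1,...,16} be an orthogonal product basis of (ℂ²)^{⊗4}. For each factor i ∈ {1,2,3,4}, let μ_i be the maximum over lines V ⊆ ℂ² of the multiplicity |{s : [a_{s,i}] = V}|. Then max(μ_1, μ_2, μ_3, μ_4) ≥ 4. -/

import Mathlib

/-!
Fix the first basis vector. Each of the other fifteen is orthogonal to it, so by the product
formula for inner products it is orthogonal to it in some tensor factor. By pigeonhole, some
factor `i` carries at least four of them, and since `ℂ²` is two-dimensional all of their `i`-th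
components span the same line, the orthogonal complement of the `i`-th component of the first
vector.
-/

/-- Concrete tensor product of `n` qubit vectors. -/
noncomputable def qvec {n : ℕ} (a : Fin n → EuclideanSpace ℂ (Fin 2)) :
    EuclideanSpace ℂ (Fin n → Fin 2) :=
  WithLp.toLp 2 (fun f => ∏ k, a k (f k))

open Finset

lemma inner_qvec {n : ℕ} (u v : Fin n → EuclideanSpace ℂ (Fin 2)) :
    inner ℂ (qvec u) (qvec v) = ∏ k, inner ℂ (u k) (v k) := by
  simp only [qvec, PiLp.inner_apply, RCLike.inner_apply, map_prod, ← prod_mul_distrib]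
  rw [prod_univ_sum, Fintype.piFinset_univ]

lemma exists_inner_eq_zero_of_orthonormal_qvec {ι : Type*} {n : ℕ}
    {a : ι → Fin n → EuclideanSpace ℂ (Fin 2)} (ha : Orthonormal ℂ fun s => qvec (a s))
    {s t : ι} (hst : s ≠ t) : ∃ i, inner ℂ (a s i) (a t i) = 0 := by
  have h := ha.inner_eq_zero hst
  rw [inner_qvec, prod_eq_zero_iff] at h
  obtain ⟨i, -, hi⟩ := h
  exact ⟨i, hi⟩

section TwoDimensional

variable {𝕜 E : Type*} [RCLike 𝕜] [NormedAddCommGroup E] [InnerProductSpace 𝕜 E]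

lemma span_singleton_eq_orthogonal_of_finrank_eq_two (hE : Module.finrank 𝕜 E = 2)
    {u v : E} (hu : u ≠ 0) (hv : v ≠ 0) (huv : inner 𝕜 u v = 0) :
    (𝕜 ∙ v) = (𝕜 ∙ u)ᗮ := by
  have : FiniteDimensional 𝕜 E := Module.finite_of_finrank_eq_succ hE
  refine Submodule.eq_of_le_of_finrank_eq ?_ ?_
  · rwa [Submodule.span_singleton_le_iff_mem, Submodule.mem_orthogonal_singleton_iff_inner_right]
  · have h := Submodule.finrank_add_finrank_orthogonal (𝕜 ∙ u)
    rw [finrank_span_singleton hu, hE] at h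
    rw [finrank_span_singleton hv]
    omega

lemma span_singleton_eq_of_inner_eq_zero_of_finrank_eq_two (hE : Module.finrank 𝕜 E = 2)
    {u v w : E} (hu : u ≠ 0) (hv : v ≠ 0) (hw : w ≠ 0)
    (huv : inner 𝕜 u v = 0) (huw : inner 𝕜 u w = 0) : (𝕜 ∙ v) = 𝕜 ∙ w := by
  rw [span_singleton_eq_orthogonal_of_finrank_eq_two hE hu hv huv,
    span_singleton_eq_orthogonal_of_finrank_eq_two hE hu hw huw]

end TwoDimensional

lemma exists_lt_card_filter_of_forall_ne_exists {ι κ : Type*} [Fintype ι] [DecidableEq ι]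
    [Fintype κ] (P : κ → ι → Prop) [∀ i, DecidablePred (P i)] {s : ι}
    (hP : ∀ t ≠ s, ∃ i, P i t) {k : ℕ} (hk : Fintype.card κ * k < Fintype.card ι - 1) :
    ∃ i, k < #{t | P i t} := by
  by_contra! h
  have hcover : univ.erase s ⊆ univ.biUnion fun i => ({t | P i t} : Finset ι) := by
    intro t ht
    obtain ⟨i, hi⟩ := hP t (ne_of_mem_erase ht)
    exact mem_biUnion.mpr ⟨i, mem_univ i, mem_filter.mpr ⟨mem_univ t, hi⟩⟩
  have := calc Fintype.card ι - 1
      = #(univ.erase s) := by rw [card_erase_of_mem (mem_univ s), card_univ]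
    _ ≤ ∑ i, #({t | P i t} : Finset ι) := (card_le_card hcover).trans card_biUnion_le
    _ ≤ ∑ _i : κ, k := sum_le_sum fun i _ => h i
    _ = Fintype.card κ * k := by simp
  omega

theorem stmt14_general
    (a : Fin 16 → Fin 4 → EuclideanSpace ℂ (Fin 2))
    (ha : ∀ s i, ‖a s i‖ = 1)
    (honb : Orthonormal ℂ (fun s => qvec (a s))) :
    ∃ i : Fin 4, ∃ s : Fin 16,
      4 ≤ {t | (ℂ ∙ a t i : Submodule ℂ (EuclideanSpace ℂ (Fin 2))) = ℂ ∙ a s i}.ncard := by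
  classical
  have hne : ∀ s i, a s i ≠ 0 := fun s i h => by simpa [h] using ha s i
  obtain ⟨i, hi⟩ := exists_lt_card_filter_of_forall_ne_exists (k := 3)
    (fun i t => inner ℂ (a 0 i) (a t i) = 0)
    (fun t ht => exists_inner_eq_zero_of_orthonormal_qvec honb (Ne.symm ht)) (by simp)
  set S : Finset (Fin 16) := {t | inner ℂ (a 0 i) (a t i) = 0}
  obtain ⟨s, hs⟩ := card_pos.mp (by omega : 0 < #S)
  have hS : (S : Set (Fin 16)) ⊆ {t | (ℂ ∙ a t i) = ℂ ∙ a s i} := fun t ht =>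
    span_singleton_eq_of_inner_eq_zero_of_finrank_eq_two finrank_euclideanSpace_fin
      (hne 0 i) (hne t i) (hne s i) (mem_filter.mp ht).2 (mem_filter.mp hs).2
  exact ⟨i, s, (Set.ncard_coe_finset S ▸ hi).trans_le (Set.ncard_le_ncard hS (Set.toFinite _))⟩

/-- For every orthogonal product basis of four qubits, some tensor factor `i` contains a line
of multiplicity at least `4`, i.e. `max (μ₁, μ₂, μ₃, μ₄) ≥ 4`. -/
theorem stmt14
    (a : Fin 16 → Fin 4 → EuclideanSpace ℂ (Fin 2))
    (ha : ∀ s i, ‖a s i‖ = 1)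
    (honb : Orthonormal ℂ (fun s => qvec (a s)))
    (hspan : Submodule.span ℂ (Set.range fun s => qvec (a s)) = ⊤) :
    ∃ i : Fin 4, ∃ s : Fin 16,
      4 ≤ {t | (ℂ ∙ a t i : Submodule ℂ (EuclideanSpace ℂ (Fin 2))) = ℂ ∙ a s i}.ncard :=
  stmt14_general a ha honb
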